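/- arXiv:1710.07080 — 3 statements merged into one kernel-verified Lean document; each statement's English description precedes it below -/
import Mathlib

section
/- With L symmetric, L 1ₙ = 0, and r = [r̂; ρ] with 1ₙᵀ r = 0, solving the constrained system L z = r with 1ₙᵀ z = 0 (writing z = [ẑ; ζ]) is equivalent to solving the (n−1)×(n−1) system L̂ (Î + 1̂1̂ᵀ) ẑ = r̂ together with ζ = −1̂ᵀ ẑ. -/
open Matrix

theorem stmt_8 {m : ℕ} (L : Matrix (Fin (m + 1)) (Fin (m + 1)) ℝ)
    (r : Fin (m + 1) → ℝ) (zhat : Fin m → ℝ) (ζ : ℝ)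
    (hsymm : L.IsSymm) (hker : L.mulVec (1 : Fin (m + 1) → ℝ) = 0)
    (hr : (1 : Fin (m + 1) → ℝ) ⬝ᵥ r = 0) :
    (L.mulVec (Fin.snoc zhat ζ) = r ∧
        (1 : Fin (m + 1) → ℝ) ⬝ᵥ (Fin.snoc zhat ζ : Fin (m + 1) → ℝ) = 0)
      ↔
    ((L.submatrix Fin.castSucc Fin.castSucc).mulVec
        (((1 : Matrix (Fin m) (Fin m) ℝ) + vecMulVec 1 1).mulVec zhat)
        = (fun j : Fin m => r j.castSucc) ∧
      ζ = -((1 : Fin m → ℝ) ⬝ᵥ zhat)) := by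
  set s : ℝ := ∑ i, zhat i with hs
  have hdot : ((1 : Fin m → ℝ) ⬝ᵥ zhat) = s := by simp [dotProduct, hs]
  set z : Fin (m+1) → ℝ := Fin.snoc zhat ζ with hz
  have rowsum : ∀ j, ∑ i, L j i = 0 := by
    intro j
    have := congrFun hker j
    simpa [mulVec, dotProduct] using this
  have hLapp : ∀ j k, L j k = L k j := fun j k => (hsymm.apply k j)
  have colsum : ∀ k, ∑ j, L j k = 0 := by
    intro k
    calc ∑ j, L j k = ∑ j, L k j := by simp [hLapp]
    _ = 0 := rowsum k
  have hsumz : (1 : Fin (m+1) → ℝ) ⬝ᵥ z = s + ζ := by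
    simp [dotProduct, hz, Fin.sum_univ_castSucc, hs]
  have hw : (((1 : Matrix (Fin m) (Fin m) ℝ) + vecMulVec 1 1).mulVec zhat)
      = fun k => zhat k + s := by
    funext k
    rw [add_mulVec, one_mulVec]
    simp [mulVec, dotProduct, vecMulVec_apply, hs]
  have hLzc : ∀ j : Fin m, L.mulVec z j.castSucc
      = ∑ k : Fin m, L j.castSucc k.castSucc * zhat k + L j.castSucc (Fin.last m) * ζ := by
    intro j
    simp [mulVec, dotProduct, hz, Fin.sum_univ_castSucc]
  have hrowtail : ∀ j : Fin m, ∑ k : Fin m, L j.castSucc k.castSucc = - L j.castSucc (Fin.last m) := by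
    intro j
    have := rowsum j.castSucc
    rw [Fin.sum_univ_castSucc] at this
    linarith
  have key : ζ = -s → ∀ j : Fin m,
      ((L.submatrix Fin.castSucc Fin.castSucc).mulVec
        (((1 : Matrix (Fin m) (Fin m) ℝ) + vecMulVec 1 1).mulVec zhat)) j
      = L.mulVec z j.castSucc := by
    intro hζ j
    rw [hw, hLzc]
    have : ∑ k : Fin m, L j.castSucc k.castSucc * (zhat k + s)
        = ∑ k : Fin m, L j.castSucc k.castSucc * zhat k + (∑ k : Fin m, L j.castSucc k.castSucc) * s := by
      rw [Finset.sum_mul, ← Finset.sum_add_distrib]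
      congr 1; funext k; ring
    simp only [mulVec, dotProduct, submatrix_apply]
    rw [this, hrowtail j, hζ]
    ring
  constructor
  · rintro ⟨hLz, hc⟩
    have hζ : ζ = -s := by rw [hsumz] at hc; linarith
    refine ⟨?_, by rw [hdot]; exact hζ⟩
    funext j
    rw [key hζ j, hLz]
  · rintro ⟨hhat, hζ'⟩
    have hζ : ζ = -s := by rw [hdot] at hζ'; exact hζ'
    have hcast : ∀ j : Fin m, L.mulVec z j.castSucc = r j.castSucc := by
      intro j
      rw [← key hζ j, hhat]
    have hrlast : r (Fin.last m) = - ∑ j : Fin m, r j.castSucc := by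
      have : ∑ i, r i = 0 := by simpa [dotProduct] using hr
      rw [Fin.sum_univ_castSucc] at this
      linarith
    have hlast : L.mulVec z (Fin.last m) = r (Fin.last m) := by
      have h1 : L.mulVec z (Fin.last m) = ∑ k : Fin (m+1), L (Fin.last m) k * z k := by
        simp [mulVec, dotProduct]
      have h2 : ∀ k, L (Fin.last m) k = - ∑ j : Fin m, L j.castSucc k := by
        intro k
        have := colsum k
        rw [Fin.sum_univ_castSucc] at this
        linarith
      have hmv : ∀ j : Fin m, ∑ k : Fin (m+1), L j.castSucc k * z k = r j.castSucc := by
        intro j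
        have := hcast j
        simpa [mulVec, dotProduct] using this
      calc L.mulVec z (Fin.last m) = ∑ k : Fin (m+1), L (Fin.last m) k * z k := h1
        _ = ∑ k : Fin (m+1), - ∑ j : Fin m, L j.castSucc k * z k := by
            refine Finset.sum_congr rfl fun k _ => ?_
            rw [h2 k, neg_mul, Finset.sum_mul]
        _ = - ∑ k : Fin (m+1), ∑ j : Fin m, L j.castSucc k * z k := by
            rw [Finset.sum_neg_distrib]
        _ = - ∑ j : Fin m, ∑ k : Fin (m+1), L j.castSucc k * z k := by
            rw [Finset.sum_comm]
        _ = - ∑ j : Fin m, r j.castSucc := by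
            congr 1; exact Finset.sum_congr rfl fun j _ => hmv j
        _ = r (Fin.last m) := hrlast.symm
    constructor
    · funext i
      refine Fin.lastCases ?_ ?_ i
      · exact hlast
      · exact hcast
    · rw [hsumz, hζ]; ring
end

section
/- Let L be symmetric with L 1ₙ = 0, V ∈ ℝ^{n×c} with Vᵀ1ₙ = 0, δ > 0, σ ∈ ℝ, and r ∈ ℝⁿ with 1ₙᵀ r = 0. Write L, V, r in partitioned form with last row/column removed (L̂, V̂, r̂). If ẑ* solves ((L̂ − σÎ) + (σ/n)·1̂1̂ᵀ + δ V̂V̂ᵀ) ẑ = r̂, then z* := [ẑ*; 0] − (1̂ᵀẑ*/n)·1ₙ satisfies (L + δVVᵀ − σI) z* = r and 1ₙᵀ z* = 0. -/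
/-!
Put `A = L + δ VVᵀ - σ I`: it is symmetric, `A 1 = -σ 1`, and its leading block is
`Â = L̂ + δ V̂V̂ᵀ - σ Î`. On the first `n - 1` rows, `A [ẑ; 0] = Â ẑ = r̂ - (σ/n)(1̂ᵀẑ) 1̂`, and
subtracting `(1̂ᵀẑ/n) 1` adds back exactly `(σ/n)(1̂ᵀẑ) 1̂`. The last row then follows from the
sums: `1ᵀ A z* = (A 1)ᵀ z* = -σ 1ᵀ z* = 0 = 1ᵀ r`.
-/

open Matrix

namespace Matrix

variable {R : Type*}

theorem mulVec_snoc_zero_castSucc [NonUnitalNonAssocSemiring R] {m : ℕ}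
    (A : Matrix (Fin (m + 1)) (Fin (m + 1)) R) (x : Fin m → R) (j : Fin m) :
    (A *ᵥ Fin.snoc x 0) j.castSucc = (A.submatrix Fin.castSucc Fin.castSucc *ᵥ x) j := by
  simp [mulVec, dotProduct, Fin.sum_univ_castSucc]

theorem one_dotProduct_mulVec_eq_zero [CommSemiring R] {n : Type*} [Fintype n]
    {A : Matrix n n R} (hA : A.IsSymm) {μ : R} (hA1 : A *ᵥ 1 = μ • 1) {z : n → R}
    (hz : 1 ⬝ᵥ z = 0) : 1 ⬝ᵥ A *ᵥ z = 0 := by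
  rw [dotProduct_mulVec, ← mulVec_transpose, hA.eq, hA1, smul_dotProduct, hz, smul_zero]

end Matrix

theorem Fin.eq_of_castSucc_eq_of_sum_eq {M : Type*} [AddCommGroup M] {m : ℕ}
    {u v : Fin (m + 1) → M} (hcs : ∀ j : Fin m, u j.castSucc = v j.castSucc)
    (hsum : ∑ i, u i = ∑ i, v i) : u = v := by
  have hlast : u (Fin.last m) = v (Fin.last m) := by
    simpa [Fin.sum_univ_castSucc, hcs] using hsum
  funext i
  exact Fin.lastCases hlast hcs i

section MeanZeroLift

variable {R : Type*} [Field R] {m : ℕ}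

def meanZeroLift (x : Fin m → R) : Fin (m + 1) → R :=
  Fin.snoc x 0 - ((1 ⬝ᵥ x) / ((m : R) + 1)) • 1

theorem one_dotProduct_meanZeroLift [CharZero R] (x : Fin m → R) : 1 ⬝ᵥ meanZeroLift x = 0 := by
  have hn : (m : R) + 1 ≠ 0 := Nat.cast_add_one_ne_zero m
  rw [meanZeroLift, dotProduct_sub, dotProduct_smul, one_dotProduct_one,
    one_dotProduct (Fin.snoc x 0), Fin.sum_univ_castSucc, ← one_dotProduct]
  simp only [Fin.snoc_castSucc, Fin.snoc_last, add_zero, Fintype.card_fin, smul_eq_mul]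
  push_cast
  field_simp
  ring

theorem mulVec_meanZeroLift_castSucc (A : Matrix (Fin (m + 1)) (Fin (m + 1)) R) {σ : R}
    (hA1 : A *ᵥ 1 = -σ • 1) (x : Fin m → R) (j : Fin m) :
    (A *ᵥ meanZeroLift x) j.castSucc
      = ((A.submatrix Fin.castSucc Fin.castSucc + (σ / ((m : R) + 1)) • vecMulVec 1 1) *ᵥ x) j := by
  simp only [meanZeroLift, mulVec_sub, mulVec_smul, hA1, Pi.sub_apply, Pi.smul_apply,
    mulVec_snoc_zero_castSucc, add_mulVec, smul_mulVec, Pi.add_apply, vecMulVec_mulVec,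
    op_smul_eq_mul, Pi.one_apply, smul_eq_mul]
  ring

theorem mulVec_meanZeroLift_eq [CharZero R] {A : Matrix (Fin (m + 1)) (Fin (m + 1)) R}
    (hA : A.IsSymm) {σ : R} (hA1 : A *ᵥ 1 = -σ • 1) {r : Fin (m + 1) → R} (hr : 1 ⬝ᵥ r = 0)
    {x : Fin m → R}
    (hx : (A.submatrix Fin.castSucc Fin.castSucc + (σ / ((m : R) + 1)) • vecMulVec 1 1) *ᵥ x
      = fun j => r j.castSucc) :
    A *ᵥ meanZeroLift x = r := by
  refine Fin.eq_of_castSucc_eq_of_sum_eq (fun j => ?_) ?_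
  · rw [mulVec_meanZeroLift_castSucc A hA1, hx]
  · rw [← one_dotProduct, ← one_dotProduct, hr,
      one_dotProduct_mulVec_eq_zero hA hA1 (one_dotProduct_meanZeroLift x)]

end MeanZeroLift

theorem stmt_12_general {m c : ℕ} (L : Matrix (Fin (m + 1)) (Fin (m + 1)) ℝ)
    (V : Matrix (Fin (m + 1)) (Fin c) ℝ) (r : Fin (m + 1) → ℝ)
    (δ σ : ℝ)
    (hsymm : L.IsSymm) (hker : L.mulVec (1 : Fin (m + 1) → ℝ) = 0)
    (hV : Vᵀ.mulVec (1 : Fin (m + 1) → ℝ) = 0)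
    (hr : (1 : Fin (m + 1) → ℝ) ⬝ᵥ r = 0)
    (zhat : Fin m → ℝ)
    (hsol : ((L.submatrix Fin.castSucc Fin.castSucc
          - σ • (1 : Matrix (Fin m) (Fin m) ℝ))
        + (σ / ((m : ℝ) + 1)) • vecMulVec 1 1
        + δ • (V.submatrix Fin.castSucc id * (V.submatrix Fin.castSucc id)ᵀ)).mulVec zhat
      = fun j : Fin m => r j.castSucc) :
    (L + δ • (V * Vᵀ) - σ • (1 : Matrix (Fin (m + 1)) (Fin (m + 1)) ℝ)).mulVec
        (Fin.snoc zhat 0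
          - (((1 : Fin m → ℝ) ⬝ᵥ zhat) / ((m : ℝ) + 1)) • (1 : Fin (m + 1) → ℝ)) = r ∧
    (1 : Fin (m + 1) → ℝ) ⬝ᵥ (Fin.snoc zhat 0
        - (((1 : Fin m → ℝ) ⬝ᵥ zhat) / ((m : ℝ) + 1)) • (1 : Fin (m + 1) → ℝ)) = 0 := by
  have hVV : (V * Vᵀ).IsSymm := by rw [IsSymm, transpose_mul, transpose_transpose]
  have hA : (L + δ • (V * Vᵀ) - σ • (1 : Matrix (Fin (m + 1)) (Fin (m + 1)) ℝ)).IsSymm :=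
    (hsymm.add (hVV.smul δ)).sub (isSymm_one.smul σ)
  have hA1 : (L + δ • (V * Vᵀ) - σ • (1 : Matrix (Fin (m + 1)) (Fin (m + 1)) ℝ)) *ᵥ 1
      = -σ • 1 := by
    rw [sub_mulVec, add_mulVec, hker, smul_mulVec, ← mulVec_mulVec, hV, mulVec_zero,
      smul_mulVec, one_mulVec, smul_zero, zero_add, zero_sub, neg_smul]
  have hblock : (L + δ • (V * Vᵀ) - σ • (1 : Matrix (Fin (m + 1)) (Fin (m + 1)) ℝ)).submatrix
        Fin.castSucc Fin.castSucc
      = L.submatrix Fin.castSucc Fin.castSucc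
        + δ • (V.submatrix Fin.castSucc id * (V.submatrix Fin.castSucc id)ᵀ) - σ • 1 := by
    -- `submatrix` commutes with `+`, `•`, and (reindexing by `id`) with `*` definitionally.
    rw [← submatrix_one _ (Fin.castSucc_injective m)]
    rfl
  refine ⟨mulVec_meanZeroLift_eq hA hA1 hr ?_, one_dotProduct_meanZeroLift zhat⟩
  rw [hblock, ← hsol]
  congr 1
  abel

theorem stmt_12 {m c : ℕ} (L : Matrix (Fin (m + 1)) (Fin (m + 1)) ℝ)
    (V : Matrix (Fin (m + 1)) (Fin c) ℝ) (r : Fin (m + 1) → ℝ)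
    (δ σ : ℝ) (hδ : 0 < δ)
    (hsymm : L.IsSymm) (hker : L.mulVec (1 : Fin (m + 1) → ℝ) = 0)
    (hV : Vᵀ.mulVec (1 : Fin (m + 1) → ℝ) = 0)
    (hr : (1 : Fin (m + 1) → ℝ) ⬝ᵥ r = 0)
    (zhat : Fin m → ℝ)
    (hsol : ((L.submatrix Fin.castSucc Fin.castSucc
          - σ • (1 : Matrix (Fin m) (Fin m) ℝ))
        + (σ / ((m : ℝ) + 1)) • vecMulVec 1 1
        + δ • (V.submatrix Fin.castSucc id * (V.submatrix Fin.castSucc id)ᵀ)).mulVec zhat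
      = fun j : Fin m => r j.castSucc) :
    (L + δ • (V * Vᵀ) - σ • (1 : Matrix (Fin (m + 1)) (Fin (m + 1)) ℝ)).mulVec
        (Fin.snoc zhat 0
          - (((1 : Fin m → ℝ) ⬝ᵥ zhat) / ((m : ℝ) + 1)) • (1 : Fin (m + 1) → ℝ)) = r ∧
    (1 : Fin (m + 1) → ℝ) ⬝ᵥ (Fin.snoc zhat 0
        - (((1 : Fin m → ℝ) ⬝ᵥ zhat) / ((m : ℝ) + 1)) • (1 : Fin (m + 1) → ℝ)) = 0 :=
  stmt_12_general L V r δ σ hsymm hker hV hr zhat hsol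
end

section
/- For the constrained system (L + δVVᵀ − σI) z = r with 1ₙᵀ z = 0 (assumptions: L symmetric, L1ₙ = 0, Vᵀ1ₙ = 0, 1ₙᵀ r = 0), writing z = [ẑ; ζ] with ζ = −1̂ᵀẑ, the system is equivalent to ((L̂ − σÎ) + (σ/n)1̂1̂ᵀ + δV̂V̂ᵀ)(Î + 1̂1̂ᵀ) ẑ = r̂. -/
open Matrix Finset

theorem stmt_13 {m c : ℕ} (L : Matrix (Fin (m + 1)) (Fin (m + 1)) ℝ)
    (V : Matrix (Fin (m + 1)) (Fin c) ℝ) (r : Fin (m + 1) → ℝ)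
    (δ σ : ℝ) (hδ : 0 < δ)
    (hsymm : L.IsSymm) (hker : L.mulVec (1 : Fin (m + 1) → ℝ) = 0)
    (hV : Vᵀ.mulVec (1 : Fin (m + 1) → ℝ) = 0)
    (hr : (1 : Fin (m + 1) → ℝ) ⬝ᵥ r = 0)
    (zhat : Fin m → ℝ) (ζ : ℝ) (hζ : ζ = -((1 : Fin m → ℝ) ⬝ᵥ zhat)) :
    (L + δ • (V * Vᵀ) - σ • (1 : Matrix (Fin (m + 1)) (Fin (m + 1)) ℝ)).mulVec
        (Fin.snoc zhat ζ) = r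
      ↔
    ((L.submatrix Fin.castSucc Fin.castSucc
          - σ • (1 : Matrix (Fin m) (Fin m) ℝ))
        + (σ / ((m : ℝ) + 1)) • vecMulVec 1 1
        + δ • (V.submatrix Fin.castSucc id * (V.submatrix Fin.castSucc id)ᵀ)).mulVec
        (((1 : Matrix (Fin m) (Fin m) ℝ) + vecMulVec 1 1).mulVec zhat)
      = fun j : Fin m => r j.castSucc := by
  have hn : ((m : ℝ) + 1) ≠ 0 := by positivity
  set s : ℝ := ∑ k, zhat k with hs
  have hζ' : ζ = -s := by simpa [dotProduct] using hζ
  -- pointwise hypothesis facts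
  have hLrow : ∀ i, ∑ k, L i k = 0 := fun i => by
    have := congrFun hker i; simpa [mulVec, dotProduct] using this
  have hLcol : ∀ k, ∑ i, L i k = 0 := fun k => by
    have h := hLrow k
    rw [← h]
    exact Finset.sum_congr rfl fun i _ => by
      have := hsymm.apply i k; simpa using this.symm
  have hVcol : ∀ t, ∑ i, V i t = 0 := fun t => by
    have := congrFun hV t; simpa [mulVec, dotProduct] using this
  have hlastL : ∀ j : Fin (m+1), L j (Fin.last m) = -∑ k : Fin m, L j k.castSucc := fun j => by
    have := hLrow j
    rw [Fin.sum_univ_castSucc] at this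
    linarith
  have hlastV : ∀ t : Fin c, V (Fin.last m) t = -∑ k : Fin m, V k.castSucc t := fun t => by
    have := hVcol t
    rw [Fin.sum_univ_castSucc] at this
    linarith
  set A := L + δ • (V * Vᵀ) - σ • (1 : Matrix (Fin (m + 1)) (Fin (m + 1)) ℝ) with hA
  set z : Fin (m+1) → ℝ := Fin.snoc zhat ζ with hz
  -- the inner vector
  have hw : ∀ k, (((1 : Matrix (Fin m) (Fin m) ℝ) + vecMulVec 1 1).mulVec zhat) k
      = zhat k + s := fun k => by
    simp [mulVec, dotProduct, Matrix.add_apply, vecMulVec_apply, one_apply, add_mul,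
      Finset.sum_add_distrib, Finset.sum_ite_eq, hs]
  -- entries of A
  have hAcc : ∀ j k : Fin m, A j.castSucc k.castSucc
      = L j.castSucc k.castSucc + δ * ∑ t, V j.castSucc t * V k.castSucc t
        - σ * (if j = k then 1 else 0) := fun j k => by
    simp [hA, Matrix.add_apply, Matrix.sub_apply, Matrix.smul_apply, Matrix.mul_apply,
      Matrix.one_apply, Fin.castSucc_inj, mul_ite]
  have hAcl : ∀ j : Fin m, A j.castSucc (Fin.last m)
      = L j.castSucc (Fin.last m) + δ * ∑ t, V j.castSucc t * V (Fin.last m) t := fun j => by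
    have : j.castSucc ≠ Fin.last m := Fin.castSucc_lt_last j |>.ne
    simp [hA, Matrix.add_apply, Matrix.sub_apply, Matrix.smul_apply, Matrix.mul_apply,
      Matrix.one_apply, this]
  -- main row identity
  have hmain : ∀ j : Fin m,
      A.mulVec z j.castSucc
        = ((L.submatrix Fin.castSucc Fin.castSucc - σ • (1 : Matrix (Fin m) (Fin m) ℝ))
            + (σ / ((m : ℝ) + 1)) • vecMulVec 1 1
            + δ • (V.submatrix Fin.castSucc id * (V.submatrix Fin.castSucc id)ᵀ)).mulVec
            (((1 : Matrix (Fin m) (Fin m) ℝ) + vecMulVec 1 1).mulVec zhat) j := by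
    intro j
    have hL : A.mulVec z j.castSucc
        = (∑ k : Fin m, A j.castSucc k.castSucc * zhat k) + A j.castSucc (Fin.last m) * ζ := by
      simp [mulVec, dotProduct, Fin.sum_univ_castSucc, hz]
    rw [hL]
    have hR : ((L.submatrix Fin.castSucc Fin.castSucc - σ • (1 : Matrix (Fin m) (Fin m) ℝ))
            + (σ / ((m : ℝ) + 1)) • vecMulVec 1 1
            + δ • (V.submatrix Fin.castSucc id * (V.submatrix Fin.castSucc id)ᵀ)).mulVec
            (((1 : Matrix (Fin m) (Fin m) ℝ) + vecMulVec 1 1).mulVec zhat) j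
        = ∑ k : Fin m,
            (L j.castSucc k.castSucc - σ * (if j = k then 1 else 0) + σ / ((m:ℝ)+1)
              + δ * ∑ t, V j.castSucc t * V k.castSucc t) * (zhat k + s) := by
      rw [mulVec, dotProduct]
      refine Finset.sum_congr rfl fun k _ => ?_
      rw [hw k]
      congr 1
      simp [Matrix.add_apply, Matrix.sub_apply, Matrix.smul_apply, Matrix.mul_apply,
        Matrix.one_apply, vecMulVec_apply, mul_ite]
    rw [hR]
    -- split RHS
    have hsplit : ∀ k : Fin m,
        (L j.castSucc k.castSucc - σ * (if j = k then 1 else 0) + σ / ((m:ℝ)+1)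
          + δ * ∑ t, V j.castSucc t * V k.castSucc t) * (zhat k + s)
        = (A j.castSucc k.castSucc * zhat k + (s * L j.castSucc k.castSucc
            + s * (δ * ∑ t, V j.castSucc t * V k.castSucc t)))
          + (-((σ * (if j = k then 1 else 0)) * s) + (σ/((m:ℝ)+1)) * (zhat k + s)) := fun k => by
      rw [hAcc j k]; ring
    rw [Finset.sum_congr rfl (fun k _ => hsplit k), Finset.sum_add_distrib]
    have hres : ∑ k : Fin m, (-((σ * (if j = k then 1 else 0)) * s)
        + (σ/((m:ℝ)+1)) * (zhat k + s)) = 0 := by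
      have h1 : ∑ k : Fin m, -((σ * if j = k then 1 else 0) * s) = -(σ * s) := by
        simp [mul_ite, ite_mul, Finset.sum_ite_eq]
      have h2 : ∑ k : Fin m, σ / ((m:ℝ)+1) * (zhat k + s)
          = σ / ((m:ℝ)+1) * (s + (m:ℝ) * s) := by
        rw [← Finset.mul_sum, Finset.sum_add_distrib, Finset.sum_const, Finset.card_univ,
          Fintype.card_fin, ← hs, nsmul_eq_mul]
      rw [Finset.sum_add_distrib, h1, h2]
      field_simp
      ring
    rw [hres, add_zero, Finset.sum_add_distrib]
    -- now handle LHS last term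
    rw [hAcl j, hlastL j.castSucc]
    have hVlast : ∑ t, V j.castSucc t * V (Fin.last m) t
        = -∑ k : Fin m, ∑ t, V j.castSucc t * V k.castSucc t := by
      rw [Finset.sum_congr rfl (fun t _ => by rw [hlastV t])]
      simp only [mul_neg, Finset.mul_sum, Finset.sum_neg_distrib]
      rw [Finset.sum_comm]
    rw [hVlast, hζ']
    have e1 : ∑ k : Fin m, (s * L j.castSucc k.castSucc
          + s * (δ * ∑ t, V j.castSucc t * V k.castSucc t))
        = s * (∑ k : Fin m, L j.castSucc k.castSucc)
          + s * (δ * ∑ k : Fin m, ∑ t, V j.castSucc t * V k.castSucc t) := by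
      rw [Finset.sum_add_distrib, ← Finset.mul_sum]
      congr 1
      rw [Finset.mul_sum, Finset.mul_sum]
    rw [e1]
    ring
  -- column sums of A
  have hAcol : ∀ k, ∑ i, A i k = -σ := fun k => by
    have hvv : ∑ i, ∑ t, V i t * V k t = 0 := by
      rw [Finset.sum_comm]
      refine Finset.sum_eq_zero fun t _ => ?_
      rw [← Finset.sum_mul, hVcol t, zero_mul]
    have hite : ∑ i : Fin (m+1), (if i = k then σ else 0) = σ := by simp
    calc ∑ i, A i k
        = ∑ i, (L i k + δ * ∑ t, V i t * V k t - (if i = k then σ else 0)) := by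
          refine Finset.sum_congr rfl fun i _ => ?_
          simp [hA, Matrix.add_apply, Matrix.sub_apply, Matrix.smul_apply, Matrix.mul_apply,
            Matrix.one_apply, mul_ite]
      _ = -σ := by
          rw [Finset.sum_sub_distrib, Finset.sum_add_distrib, hLcol k, ← Finset.mul_sum,
            hvv, hite]
          ring
  have hzsum : ∑ k, z k = 0 := by
    rw [Fin.sum_univ_castSucc]
    simp [hz, hζ', hs]
  have hzero : ∑ i, A.mulVec z i = 0 := by
    simp only [mulVec, dotProduct]
    rw [Finset.sum_comm]
    calc ∑ k, ∑ i, A i k * z k = ∑ k, (-σ) * z k := by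
          refine Finset.sum_congr rfl fun k _ => ?_
          rw [← Finset.sum_mul, hAcol k]
      _ = (-σ) * ∑ k, z k := by rw [Finset.mul_sum]
      _ = 0 := by rw [hzsum]; ring
  have hrsum : ∑ i, r i = 0 := by simpa [dotProduct] using hr
  constructor
  · intro h
    funext j
    rw [← hmain j, h]
  · intro h
    funext i
    refine Fin.lastCases ?_ ?_ i
    · have h1 : ∀ j : Fin m, A.mulVec z j.castSucc = r j.castSucc := fun j => by
        rw [hmain j, h]
      have h2 := hzero
      rw [Fin.sum_univ_castSucc] at h2
      rw [Finset.sum_congr rfl (fun j _ => h1 j)] at h2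
      have h3 := hrsum
      rw [Fin.sum_univ_castSucc] at h3
      linarith
    · intro j
      rw [hmain j, h]
end
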